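/- For every permutation π of {1,…,n} and every integer m ≥ 2, π avoids every pattern of A_m if and only if every diagram cell of π has rank at most m−3. -/

import Mathlib

/-- `π` contains the pattern `τ` if there is a strictly increasing sequence of indices
along which the values of `π` are in the same relative order as the values of `τ`. -/
def Contains {n m : ℕ} (π : Equiv.Perm (Fin n)) (τ : Equiv.Perm (Fin m)) : Prop :=
  ∃ f : Fin m → Fin n, StrictMono f ∧ ∀ s t : Fin m, π (f s) < π (f t) ↔ τ s < τ t

/-- The rank of a cell `(i,j)`: the number of indices `k < i` with `π k < j`. -/
noncomputable def diagRank (n : ℕ) (π : Equiv.Perm (Fin n)) (i j : Fin n) : ℕ :=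
  Nat.card {k : Fin n // k < i ∧ π k < j}

theorem avoids_Am_iff_ranks_le (n m : ℕ) (π : Equiv.Perm (Fin n)) (hm : 2 ≤ m) :
    (∀ τ : Equiv.Perm (Fin m),
        τ ⟨m - 2, by omega⟩ = ⟨m - 1, by omega⟩ → τ ⟨m - 1, by omega⟩ = ⟨m - 2, by omega⟩ →
          ¬ Contains π τ) ↔
    (∀ i j : Fin n, j < π i → i < π.symm j → (diagRank n π i j : ℤ) ≤ (m : ℤ) - 3) := by
  obtain ⟨M, rfl⟩ : ∃ M, m = M + 2 := ⟨m - 2, by omega⟩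
  have hMlt : M < M + 2 := by omega
  have hM1lt : M + 1 < M + 2 := by omega
  have hcardeq : ∀ i j : Fin n,
      diagRank n π i j = (Finset.univ.filter (fun k => k < i ∧ π k < j)).card := by
    intro i j
    rw [diagRank, Nat.card_eq_fintype_card]
    exact Fintype.card_subtype _
  constructor
  · -- avoidance → small ranks
    intro h i j hji hij
    by_contra hc
    push_neg at hc
    have hrank : M ≤ diagRank n π i j := by omega
    set S : Finset (Fin n) := Finset.univ.filter (fun k => k < i ∧ π k < j) with hS
    have hMS : M ≤ S.card := by rw [← hcardeq]; exact hrank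
    set e := S.orderEmbOfCardLe hMS with he
    have hemem : ∀ s : Fin M, e s < i ∧ π (e s) < j := by
      intro s
      have := Finset.orderEmbOfCardLe_mem S hMS s
      simpa [hS] using this
    set f : Fin (M + 2) → Fin n := fun s =>
      if hs : (s : ℕ) < M then e ⟨s, hs⟩ else if (s : ℕ) = M then i else π.symm j with hf
    have hfs : ∀ (s : Fin (M + 2)) (hs : (s : ℕ) < M), f s = e ⟨s, hs⟩ := by
      intro s hs; simp [hf, hs]
    have hfM : f ⟨M, hMlt⟩ = i := by simp [hf]
    have hfM1 : f ⟨M + 1, hM1lt⟩ = π.symm j := by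
      simp only [hf]
      rw [dif_neg (by omega), if_neg (by omega)]
    have hfmono : StrictMono f := by
      intro s t hst
      have hst' : (s : ℕ) < (t : ℕ) := hst
      by_cases hs : (s : ℕ) < M
      · rw [hfs s hs]
        by_cases ht : (t : ℕ) < M
        · rw [hfs t ht]
          exact e.strictMono (show (⟨(s : ℕ), hs⟩ : Fin M) < ⟨(t : ℕ), ht⟩ from hst')
        · have h1 : e ⟨(s : ℕ), hs⟩ < i := (hemem _).1
          simp only [hf]
          rw [dif_neg ht]
          by_cases ht2 : (t : ℕ) = M
          · rw [if_pos ht2]; exact h1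
          · rw [if_neg ht2]; exact h1.trans hij
      · have hsM : (s : ℕ) = M := by omega
        have htM : (t : ℕ) = M + 1 := by omega
        have hseq : s = ⟨M, hMlt⟩ := Fin.ext hsM
        have hteq : t = ⟨M + 1, hM1lt⟩ := Fin.ext htM
        rw [hseq, hteq, hfM, hfM1]
        exact hij
    set g : Fin (M + 2) → Fin n := fun s => π (f s) with hg
    have hgM : g ⟨M, hMlt⟩ = π i := by rw [hg]; simp [hfM]
    have hgM1 : g ⟨M + 1, hM1lt⟩ = j := by
      rw [hg]; simp only [hfM1]; exact π.apply_symm_apply j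
    have hgs : ∀ (s : Fin (M + 2)), (s : ℕ) < M → g s < j := by
      intro s hs
      rw [hg]; simp only [hfs s hs]
      exact (hemem _).2
    have hginj : Function.Injective g :=
      fun a b hab => hfmono.injective (π.injective hab)
    set T : Finset (Fin n) := Finset.univ.image g with hT
    have hTcard : T.card = M + 2 := by
      rw [hT, Finset.card_image_of_injective _ hginj, Finset.card_univ, Fintype.card_fin]
    set ρ := T.orderIsoOfFin hTcard with hρ
    have hgmem : ∀ s, g s ∈ T := fun s => Finset.mem_image_of_mem g (Finset.mem_univ s)
    set σ : Fin (M + 2) → Fin (M + 2) := fun s => ρ.symm ⟨g s, hgmem s⟩ with hσ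
    have hσiff : ∀ s t, σ s < σ t ↔ g s < g t := by
      intro s t
      rw [hσ]
      simp only [ρ.symm.lt_iff_lt]
      rfl
    have hσinj : Function.Injective σ := by
      intro a b hab
      apply hginj
      have h1 : ¬ g a < g b := by rw [← hσiff]; simp [hab]
      have h2 : ¬ g b < g a := by rw [← hσiff]; simp [hab]
      exact le_antisymm (le_of_not_gt h2) (le_of_not_gt h1)
    have hσbij : Function.Bijective σ := Finite.injective_iff_bijective.mp hσinj
    set τ : Equiv.Perm (Fin (M + 2)) := Equiv.ofBijective σ hσbij with hτ
    have hτs : ∀ s, τ s = σ s := fun s => rfl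
    -- g ⟨M⟩ is the maximum value
    have hle : ∀ t, g t ≤ g ⟨M, hMlt⟩ := by
      intro t
      rcases lt_trichotomy (t : ℕ) M with ht | ht | ht
      · exact le_of_lt ((hgs t ht).trans (by rw [hgM]; exact hji))
      · rw [show t = ⟨M, hMlt⟩ from Fin.ext ht]
      · have : t = ⟨M + 1, hM1lt⟩ := Fin.ext (show (t : ℕ) = M + 1 by have := t.isLt; omega)
        rw [this, hgM1, hgM]
        exact le_of_lt hji
    have hσM : σ ⟨M, hMlt⟩ = ⟨M + 1, hM1lt⟩ := by
      obtain ⟨u, hu⟩ := hσbij.2 ⟨M + 1, hM1lt⟩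
      have h1 : σ u ≤ σ ⟨M, hMlt⟩ := by
        rcases eq_or_lt_of_le (hle u) with h | h
        · exact le_of_eq (congrArg _ (hginj h))
        · exact le_of_lt ((hσiff _ _).mpr h)
      have h1' : (⟨M + 1, hM1lt⟩ : Fin (M + 2)) ≤ σ ⟨M, hMlt⟩ := hu ▸ h1
      have h2 : (σ ⟨M, hMlt⟩ : ℕ) ≤ M + 1 := Nat.lt_succ_iff.mp (σ ⟨M, hMlt⟩).isLt
      exact le_antisymm (Fin.le_def.mpr h2) h1'
    have hcst : M ≤ M + 2 := by omega
    have hσM1 : σ ⟨M + 1, hM1lt⟩ = ⟨M, hMlt⟩ := by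
      have h1 : σ ⟨M + 1, hM1lt⟩ < σ ⟨M, hMlt⟩ := by
        rw [hσiff]
        rw [hgM1, hgM]
        exact hji
      have hup : (σ ⟨M + 1, hM1lt⟩ : ℕ) < M + 1 := by
        rw [hσM] at h1; exact h1
      have hlt2 : ∀ t : Fin M, σ (Fin.castLE hcst t) < σ ⟨M + 1, hM1lt⟩ := by
        intro t
        rw [hσiff]
        rw [hgM1]
        exact hgs _ (by rw [Fin.coe_castLE]; exact t.isLt)
      have hinj2 : Function.Injective
          (fun t : Fin M => (⟨σ (Fin.castLE hcst t), hlt2 t⟩ :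
              Set.Iio (σ ⟨M + 1, hM1lt⟩))) := by
        intro a b hab
        have h3 : σ (Fin.castLE hcst a) = σ (Fin.castLE hcst b) :=
          congrArg Subtype.val hab
        exact Fin.castLE_injective hcst (hσinj h3)
      have hlow : M ≤ (σ ⟨M + 1, hM1lt⟩ : ℕ) := by
        have := Fintype.card_le_of_injective _ hinj2
        rwa [Fintype.card_fin, ← Set.toFinset_card, Set.toFinset_Iio, Fin.card_Iio] at this
      exact Fin.ext (show (σ ⟨M + 1, hM1lt⟩ : ℕ) = M by omega)
    exact h τ (by rw [hτs]; exact hσM) (by rw [hτs]; exact hσM1)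
      ⟨f, hfmono, fun s t => (hσiff s t).symm⟩
  · -- small ranks → avoidance
    intro h τ ht1 ht2 hcon
    obtain ⟨f, hf, hiff⟩ := hcon
    have ht1' : τ ⟨M, hMlt⟩ = ⟨M + 1, hM1lt⟩ := ht1
    have ht2' : τ ⟨M + 1, hM1lt⟩ = ⟨M, hMlt⟩ := ht2
    set i := f ⟨M, hMlt⟩ with hi
    set j := π (f ⟨M + 1, hM1lt⟩) with hj
    have hji : j < π i := by
      rw [hi, hj, hiff, ht1', ht2']
      exact Fin.mk_lt_mk.mpr (by omega)
    have hij : i < π.symm j := by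
      rw [hj, π.symm_apply_apply]
      exact hf (Fin.mk_lt_mk.mpr (by omega))
    have key := h i j hji hij
    have hcst : M ≤ M + 2 := by omega
    have hmem : ∀ t : Fin M,
        f (Fin.castLE hcst t) < i ∧ π (f (Fin.castLE hcst t)) < j := by
      intro t
      constructor
      · exact hf (Fin.lt_def.mpr (by rw [Fin.coe_castLE]; exact t.isLt))
      · rw [hj, hiff, ht2']
        have hne1 : τ (Fin.castLE hcst t) ≠ ⟨M + 1, hM1lt⟩ := by
          rw [← ht1']
          intro hc
          have h4 := congrArg Fin.val (τ.injective hc)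
          rw [Fin.coe_castLE] at h4
          have h5 : (t : ℕ) = M := h4
          have := t.isLt
          omega
        have hne2 : τ (Fin.castLE hcst t) ≠ ⟨M, hMlt⟩ := by
          rw [← ht2']
          intro hc
          have h4 := congrArg Fin.val (τ.injective hc)
          rw [Fin.coe_castLE] at h4
          have h5 : (t : ℕ) = M + 1 := h4
          have := t.isLt
          omega
        have hb : (τ (Fin.castLE hcst t) : ℕ) < M + 2 := (τ _).isLt
        have hb1 : (τ (Fin.castLE hcst t) : ℕ) ≠ M + 1 := fun hc => hne1 (Fin.ext hc)
        have hb2 : (τ (Fin.castLE hcst t) : ℕ) ≠ M := fun hc => hne2 (Fin.ext hc)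
        exact Fin.lt_def.mpr (show (τ (Fin.castLE hcst t) : ℕ) < M by omega)
    have hrank : M ≤ diagRank n π i j := by
      have hinj : Function.Injective
          (fun t : Fin M => (⟨f (Fin.castLE hcst t), hmem t⟩ :
            {k : Fin n // k < i ∧ π k < j})) := by
        intro a b hab
        have h3 : f (Fin.castLE hcst a) = f (Fin.castLE hcst b) :=
          congrArg Subtype.val hab
        exact Fin.castLE_injective hcst (hf.injective h3)
      have := Nat.card_le_card_of_injective _ hinj
      rwa [Nat.card_eq_fintype_card, Fintype.card_fin] at this
    omega
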